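/- arXiv:1209.0220 — 3 statements merged into one kernel-verified Lean document; each statement's English description precedes it below -/
import Mathlib

section
/- Let w be a bi-infinite word over a finite alphabet A with least period n. Then the set S of all finite words over A of length exactly n + 1 that are not factors of w is a finite set that defines w. -/
/-- `u` is a (finite) factor of the bi-infinite word `w`. -/
def IsFactor {A : Type} (w : ℤ → A) (u : List A) : Prop :=
  ∃ i : ℤ, u = (List.range u.length).map fun j => w (i + j)

/-- `w'` is a shift of `w`. -/
def IsShift {A : Type} (w' w : ℤ → A) : Prop :=
  ∃ t : ℤ, ∀ i : ℤ, w' i = w (i + t)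

/-- A set `S` of finite words defines the bi-infinite word `w`. -/
def Defines {A : Type} (S : Set (List A)) (w : ℤ → A) : Prop :=
  (∀ u ∈ S, ¬ IsFactor w u) ∧
  ∀ w' : ℤ → A, (∀ u ∈ S, ¬ IsFactor w' u) → IsShift w' w

/-- `w` has period `n`. -/
def HasPeriod {A : Type} (w : ℤ → A) (n : ℕ) : Prop :=
  ∀ i : ℤ, w (i + n) = w i

/-- `n` is the least period of `w`. -/
def IsLeastPeriod {A : Type} (w : ℤ → A) (n : ℕ) : Prop :=
  1 ≤ n ∧ HasPeriod w n ∧ ∀ m : ℕ, 1 ≤ m → HasPeriod w m → n ≤ m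

/-- `u` is a minimal forbidden word of `w`: it is not a factor of `w`, but every
proper factor of `u` is a factor of `w`. -/
def MinForbidden {A : Type} (w : ℤ → A) (u : List A) : Prop :=
  ¬ IsFactor w u ∧ ∀ v : List A, v <:+: u → v ≠ u → IsFactor w v

/-!
If `w'` avoids every word of length `n + 1` missing from `w`, then each window `w'[i, i + n]`
occurs somewhere in `w`, whose letters at distance `n` agree; hence `w' (i + n) = w' i` for
all `i`. So `w'` is `n`-periodic, and it agrees with a shift of `w` on its first window of
length `n`, which determines an `n`-periodic word.
-/

def window {A : Type} (w : ℤ → A) (i : ℤ) (m : ℕ) : List A :=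
  (List.range m).map fun j : ℕ => w (i + j)

/-- `IsFactor` with the index cast `ℕ → ℤ` done letterwise rather than through the list monad. -/
lemma isFactor_iff {A : Type} {w : ℤ → A} {u : List A} :
    IsFactor w u ↔ ∃ i : ℤ, u = (List.range u.length).map fun j : ℕ => w (i + j) := by
  have hcast (m : ℕ) : (do let a ← List.range m; pure (a : ℤ) : List ℤ) =
      (List.range m).map Nat.cast := List.flatMap_pure_eq_map _ _
  simp only [IsFactor, hcast, List.map_map]
  rfl

@[simp]
lemma length_window {A : Type} (w : ℤ → A) (i : ℤ) (m : ℕ) : (window w i m).length = m := by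
  simp [window]

lemma isFactor_window {A : Type} (w : ℤ → A) (i : ℤ) (m : ℕ) : IsFactor w (window w i m) :=
  isFactor_iff.2 ⟨i, by rw [length_window]; rfl⟩

lemma isFactor_window_iff {A : Type} {w w' : ℤ → A} {i : ℤ} {m : ℕ} :
    IsFactor w (window w' i m) ↔ ∃ t : ℤ, ∀ j < m, w' (i + j) = w (t + j) := by
  rw [isFactor_iff, length_window]
  simp only [window, List.map_inj_left, List.mem_range]

section Periods

variable {A : Type} {w : ℤ → A} {n : ℕ}

lemma HasPeriod.apply_emod (hp : HasPeriod w n) (i : ℤ) : w (i % n) = w i := by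
  conv_rhs => rw [← Int.emod_add_mul_ediv i n, mul_comm]
  exact ((show Function.Periodic w n from hp).int_mul _ _).symm

lemma HasPeriod.comp_add_right (hp : HasPeriod w n) (t : ℤ) :
    HasPeriod (fun i => w (i + t)) n := fun i => by
  simp only [add_right_comm i]
  exact hp _

lemma HasPeriod.ext {v : ℤ → A} (hn : 0 < n) (hw : HasPeriod w n) (hv : HasPeriod v n)
    (h : ∀ j < n, w j = v j) : w = v := by
  funext i
  have hnonneg : 0 ≤ i % n := Int.emod_nonneg i (by omega)
  have hlt : i % n < n := Int.emod_lt_of_pos i (by omega)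
  rw [← hw.apply_emod, ← hv.apply_emod, ← Int.toNat_of_nonneg hnonneg]
  exact h _ (by omega)

lemma HasPeriod.of_forall_isFactor_window {w' : ℤ → A} (hp : HasPeriod w n)
    (h : ∀ i, IsFactor w (window w' i (n + 1))) : HasPeriod w' n := fun i => by
  obtain ⟨t, ht⟩ := isFactor_window_iff.1 (h i)
  have h₀ := ht 0 n.succ_pos
  have hₙ := ht n n.lt_succ_self
  rw [Nat.cast_zero, add_zero, add_zero] at h₀
  rw [hₙ, h₀, hp]

end Periods

theorem nonfactors_of_length_period_succ_define {A : Type} [Fintype A]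
    (w : ℤ → A) (n : ℕ) (hn : IsLeastPeriod w n) :
    ({u : List A | u.length = n + 1 ∧ ¬ IsFactor w u}).Finite ∧
    Defines {u : List A | u.length = n + 1 ∧ ¬ IsFactor w u} w := by
  obtain ⟨hn, hp, -⟩ := hn
  refine ⟨(List.finite_length_eq A (n + 1)).subset fun u hu => hu.1, fun u hu => hu.2,
    fun w' hw' => ?_⟩
  have hwindows : ∀ i, IsFactor w (window w' i (n + 1)) := fun i => by
    by_contra hi
    exact hw' _ ⟨length_window w' i _, hi⟩ (isFactor_window w' i _)
  obtain ⟨t, ht⟩ := isFactor_window_iff.1 (hwindows 0)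
  refine ⟨t, congrFun (HasPeriod.ext hn (hp.of_forall_isFactor_window hwindows)
    (hp.comp_add_right t) fun j hj => ?_)⟩
  simpa [add_comm] using ht j (by omega)
end

section
/- Let w be a bi-infinite word over a finite alphabet A and let S be a finite set of finite words over A that defines w. Then the number of minimal forbidden words of w is at most the cardinality of S. -/
section

variable {A : Type} {g w : ℤ → A} {u v : List A}

def factorAt (w : ℤ → A) (i : ℤ) (n : ℕ) : List A :=
  (List.range n).map fun k : ℕ => w (i + k)

@[simp]
theorem length_factorAt (w : ℤ → A) (i : ℤ) (n : ℕ) : (factorAt w i n).length = n := by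
  simp [factorAt]

@[simp]
theorem getElem_factorAt (w : ℤ → A) (i : ℤ) {n k : ℕ} (hk : k < (factorAt w i n).length) :
    (factorAt w i n)[k] = w (i + k) := by
  simp [factorAt]

theorem factorAt_add (w : ℤ → A) (i : ℤ) (m n : ℕ) :
    factorAt w i (m + n) = factorAt w i m ++ factorAt w (i + m) n := by
  simp [factorAt, List.range_add, add_assoc]

theorem factorAt_congr {a b : ℤ} {n : ℕ} (h : ∀ k < n, g (a + k) = w (b + k)) :
    factorAt g a n = factorAt w b n :=
  List.map_congr_left fun k hk => h k (List.mem_range.1 hk)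

theorem factorAt_eq_iff {i : ℤ} {n : ℕ} :
    factorAt w i n = u ↔ n = u.length ∧ ∀ k (hk : k < u.length), u[k] = w (i + k) := by
  constructor
  · rintro rfl
    simp
  · rintro ⟨rfl, h⟩
    exact List.ext_getElem (by simp) fun k _ hk => by simp [h k hk]

theorem isFactor_iff_exists_factorAt :
    IsFactor w u ↔ ∃ i n, factorAt w i n = u := by
  -- in `IsFactor`, `List.range u.length` is coerced to a `List ℤ` by a monadic lift
  have hcast (n : ℕ) : (do let a ← List.range n; pure (a : ℤ) : List ℤ) = (List.range n).map (↑) :=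
    List.flatMap_pure_eq_map _ _
  simp only [IsFactor, hcast, List.map_map]
  constructor
  · rintro ⟨i, hi⟩
    exact ⟨i, u.length, hi.symm⟩
  · rintro ⟨i, n, rfl⟩
    exact ⟨i, by rw [length_factorAt]; rfl⟩

theorem infix_factorAt_iff {i : ℤ} {n : ℕ} :
    u <:+: factorAt w i n ↔ ∃ m l, m + l ≤ n ∧ factorAt w (i + m) l = u := by
  constructor
  · rintro ⟨s, t, h⟩
    have hn : n = s.length + u.length + t.length := by
      simpa [add_assoc] using (congrArg List.length h).symm
    rw [hn, factorAt_add, factorAt_add] at h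
    have hsu := (List.append_inj h (by simp)).1
    exact ⟨s.length, u.length, by omega, (List.append_inj hsu (by simp)).2.symm⟩
  · rintro ⟨m, l, hm, rfl⟩
    obtain ⟨r, rfl⟩ := Nat.exists_eq_add_of_le hm
    rw [factorAt_add, factorAt_add]
    exact List.infix_append _ _ _

theorem IsFactor.of_infix (huv : u <:+: v) (hv : IsFactor w v) :
    IsFactor w u := by
  obtain ⟨i, n, rfl⟩ := isFactor_iff_exists_factorAt.1 hv
  obtain ⟨m, l, -, hu⟩ := infix_factorAt_iff.1 huv
  exact isFactor_iff_exists_factorAt.2 ⟨_, _, hu⟩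

theorem IsFactor.of_isShift (hgw : IsShift g w) (hu : IsFactor g u) :
    IsFactor w u := by
  obtain ⟨t, ht⟩ := hgw
  obtain ⟨i, n, rfl⟩ := isFactor_iff_exists_factorAt.1 hu
  exact isFactor_iff_exists_factorAt.2 ⟨i + t, n, factorAt_congr fun k _ => by rw [ht]; ring_nf⟩

theorem IsFactor.isFactor_or_infix_of_agree {s t : ℤ}
    (hu : factorAt g 0 u.length = u) (hleft : ∀ x : ℤ, x + 2 ≤ u.length → g x = w (x + s))
    (hright : ∀ x : ℤ, 1 ≤ x → g x = w (x + t)) (hv : IsFactor g v) :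
    IsFactor w v ∨ u <:+: v := by
  obtain ⟨a, n, rfl⟩ := isFactor_iff_exists_factorAt.1 hv
  by_cases hl : a + n + 1 ≤ u.length
  · refine .inl (isFactor_iff_exists_factorAt.2 ⟨a + s, n, factorAt_congr fun k hk => ?_⟩)
    rw [hleft _ (by omega)]
    ring_nf
  by_cases hr : 1 ≤ a
  · refine .inl (isFactor_iff_exists_factorAt.2 ⟨a + t, n, factorAt_congr fun k hk => ?_⟩)
    rw [hright _ (by omega)]
    ring_nf
  refine .inr (infix_factorAt_iff.2 ⟨(-a).toNat, u.length, by omega, ?_⟩)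
  rw [show a + (-a).toNat = 0 by omega, hu]

theorem exists_agree_of_isFactor_dropLast_of_isFactor_tail
    (hl : IsFactor w u.dropLast) (hr : IsFactor w u.tail) :
    ∃ (g : ℤ → A) (s t : ℤ), factorAt g 0 u.length = u ∧
      (∀ x : ℤ, x + 2 ≤ u.length → g x = w (x + s)) ∧ ∀ x : ℤ, 1 ≤ x → g x = w (x + t) := by
  obtain ⟨i, n, hi⟩ := isFactor_iff_exists_factorAt.1 hl
  obtain ⟨j, m, hj⟩ := isFactor_iff_exists_factorAt.1 hr
  simp only [factorAt_eq_iff, List.length_dropLast, List.length_tail, List.getElem_dropLast,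
    List.getElem_tail] at hi hj
  -- past the end of `u`, the default value of `getD` supplies the right half of the glued word
  refine ⟨fun x => if x < 0 then w (x + i) else u.getD x.toNat (w (x + (j - 1))), i, j - 1,
    factorAt_eq_iff.2 ⟨rfl, fun k hk => ?_⟩, fun x hx => ?_, fun x hx => ?_⟩
  · rw [if_neg (by omega), zero_add, Int.toNat_natCast, List.getD_eq_getElem _ _ hk]
  · dsimp only
    split_ifs
    · rfl
    · rw [List.getD_eq_getElem _ _ (by omega), hi.2 _ (by omega)]
      congr 1
      omega
  · dsimp only
    rw [if_neg (by omega)]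
    by_cases hx' : x < u.length
    · obtain ⟨k, rfl⟩ : ∃ k : ℕ, x = k + 1 := ⟨x.toNat - 1, by omega⟩
      rw [List.getD_eq_getElem _ _ (by omega)]
      simp only [show ((k : ℤ) + 1).toNat = k + 1 by omega, hj.2 k (by omega)]
      congr 1
      omega
    · exact List.getD_eq_default _ _ (by omega)

def IsLeastForbiddenInfix (w : ℤ → A) (u s : List A) : Prop :=
  ¬ IsFactor w u ∧ u <:+: s ∧ ∀ v, v <:+: s → ¬ IsFactor w v → u <:+: v

theorem IsLeastForbiddenInfix.unique {u' s : List A} (hu : IsLeastForbiddenInfix w u s)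
    (hu' : IsLeastForbiddenInfix w u' s) : u = u' :=
  List.infix_antisymm (hu.2.2 u' hu'.2.1 hu'.1) (hu'.2.2 u hu.2.1 hu.1)

theorem MinForbidden.ne_nil (hu : MinForbidden w u) : u ≠ [] := by
  rintro rfl
  exact hu.1 (isFactor_iff_exists_factorAt.2 ⟨0, 0, rfl⟩)

theorem MinForbidden.isFactor_of_infix_of_length_lt (hu : MinForbidden w u) (hvu : v <:+: u)
    (hlt : v.length < u.length) : IsFactor w v :=
  hu.2 v hvu fun h => (h ▸ hlt).false

theorem MinForbidden.isFactor_dropLast (hu : MinForbidden w u) : IsFactor w u.dropLast :=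
  hu.isFactor_of_infix_of_length_lt (List.dropLast_prefix u).isInfix <| by
    simpa using List.length_pos_iff.2 hu.ne_nil

theorem MinForbidden.isFactor_tail (hu : MinForbidden w u) : IsFactor w u.tail :=
  hu.isFactor_of_infix_of_length_lt (List.tail_suffix u).isInfix <| by
    simpa using List.length_pos_iff.2 hu.ne_nil

theorem MinForbidden.exists_mem_isLeastForbiddenInfix {S : Set (List A)} (hdef : Defines S w)
    (hu : MinForbidden w u) : ∃ s ∈ S, IsLeastForbiddenInfix w u s := by
  obtain ⟨g, a, b, hgu, hleft, hright⟩ :=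
    exists_agree_of_isFactor_dropLast_of_isFactor_tail hu.isFactor_dropLast hu.isFactor_tail
  have hfactor (v : List A) (hv : IsFactor g v) : IsFactor w v ∨ u <:+: v :=
    hv.isFactor_or_infix_of_agree hgu hleft hright
  obtain ⟨s, hsS, hs⟩ : ∃ s ∈ S, IsFactor g s := by
    by_contra! h
    exact hu.1 ((isFactor_iff_exists_factorAt.2 ⟨0, _, hgu⟩).of_isShift (hdef.2 g h))
  exact ⟨s, hsS, hu.1, (hfactor s hs).resolve_left (hdef.1 s hsS),
    fun v hvs hv => (hfactor v (hs.of_infix hvs)).resolve_left hv⟩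

end

theorem card_minimal_forbidden_le_general {A : Type}
    (w : ℤ → A) (S : Finset (List A)) (hdef : Defines (↑S) w) :
    ({u : List A | MinForbidden w u}).Finite ∧
    ({u : List A | MinForbidden w u}).ncard ≤ S.card := by
  choose! f hfS hf using fun u (hu : MinForbidden w u) => hu.exists_mem_isLeastForbiddenInfix hdef
  have hinj : Set.InjOn f {u | MinForbidden w u} := fun u hu u' hu' h =>
    (hf u hu).unique (h ▸ hf u' hu')
  exact ⟨Set.Finite.of_injOn hfS hinj S.finite_toSet,
    (Set.ncard_le_ncard_of_injOn f hfS hinj).trans_eq (Set.ncard_coe_finset S)⟩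

theorem card_minimal_forbidden_le {A : Type} [Fintype A]
    (w : ℤ → A) (S : Finset (List A)) (hdef : Defines (↑S) w) :
    ({u : List A | MinForbidden w u}).Finite ∧
    ({u : List A | MinForbidden w u}).ncard ≤ S.card :=
  card_minimal_forbidden_le_general w S hdef
end

section
/- Let w be a bi-infinite word over a finite alphabet A with least period n. Then every minimal forbidden word of w has length at most n + 1. -/
variable {A : Type} {w : ℤ → A} {n : ℕ} {u : List A}

-- The cast `List.range _ : List ℤ` in `IsFactor` elaborates as a `flatMap` of singletons.
theorem isFactor_iff_getElem :
    IsFactor w u ↔ ∃ i : ℤ, ∀ j (hj : j < u.length), u[j] = w (i + j) := by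
  refine exists_congr fun i => ⟨fun h j hj => ?_, fun h => List.ext_getElem (by simp) ?_⟩
  · rw [List.getElem_of_eq h hj]
    simp [← List.map_eq_flatMap]
  · intro j hj _
    simp [h j hj, ← List.map_eq_flatMap]

theorem HasPeriod.apply_add_mul (hper : HasPeriod w n) (m q : ℤ) : w (m + n * q) = w m := by
  induction q using Int.induction_on generalizing m with
  | zero => simp
  | succ q ih => rw [mul_add_one, ← add_assoc, hper, ih]
  | pred q ih =>
    rw [← ih m, ← hper (m + n * (-q - 1))]
    congr 1
    ring

theorem HasPeriod.apply_add_eq_of_forall_lt (hper : HasPeriod w n) (hn : 0 < n) {a b : ℤ}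
    (hab : ∀ j < n, w (a + j) = w (b + j)) (m : ℤ) : w (a + m) = w (b + m) := by
  have hn' : (0 : ℤ) < n := by exact_mod_cast hn
  obtain ⟨j, hj⟩ : ∃ j : ℕ, (j : ℤ) = m % n := ⟨_, Int.toNat_of_nonneg (Int.emod_nonneg m hn'.ne')⟩
  have hjn : j < n := by have := Int.emod_lt_of_pos m hn'; omega
  have hm : m = j + n * (m / n) := by rw [hj, Int.emod_add_mul_ediv]
  rw [hm, ← add_assoc, ← add_assoc, hper.apply_add_mul, hper.apply_add_mul, hab j hjn]

theorem HasPeriod.isFactor_of_isFactor_dropLast_of_isFactor_tail (hper : HasPeriod w n)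
    (hn : 0 < n) (hlen : n + 2 ≤ u.length) (hpre : IsFactor w u.dropLast)
    (hsuf : IsFactor w u.tail) : IsFactor w u := by
  obtain ⟨i, hi⟩ := isFactor_iff_getElem.1 hpre
  obtain ⟨k, hk⟩ := isFactor_iff_getElem.1 hsuf
  simp only [List.length_dropLast, List.getElem_dropLast, List.length_tail,
    List.getElem_tail] at hi hk
  have hshift : ∀ m : ℤ, w (k + m) = w (i + 1 + m) :=
    hper.apply_add_eq_of_forall_lt hn fun j hj => by
      rw [← hk j (by omega), hi (j + 1) (by omega)]; push_cast; ring_nf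
  refine isFactor_iff_getElem.2 ⟨i, fun j hj => ?_⟩
  by_cases hlast : j < u.length - 1
  · exact hi j hlast
  · obtain rfl : j = (u.length - 2) + 1 := by omega
    rw [hk _ (by omega), hshift]
    push_cast; ring_nf

theorem minimal_forbidden_length_le_general {A : Type}
    (w : ℤ → A) (n : ℕ) (hn : IsLeastPeriod w n) :
    ∀ u : List A, MinForbidden w u → u.length ≤ n + 1 := by
  obtain ⟨hn, hper, -⟩ := hn
  rintro u ⟨hforbidden, hproper⟩
  by_contra! hlong
  refine hforbidden (hper.isFactor_of_isFactor_dropLast_of_isFactor_tail hn hlong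
    (hproper _ (List.dropLast_prefix u).isInfix (ne_of_apply_ne List.length ?_))
    (hproper _ (List.tail_suffix u).isInfix (ne_of_apply_ne List.length ?_)))
  all_goals simp only [List.length_dropLast, List.length_tail]; omega

theorem minimal_forbidden_length_le {A : Type} [Fintype A]
    (w : ℤ → A) (n : ℕ) (hn : IsLeastPeriod w n) :
    ∀ u : List A, MinForbidden w u → u.length ≤ n + 1 :=
  minimal_forbidden_length_le_general w n hn
end
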